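/- Invariant of the disambiguation construction (Lemma on reachable states): if A' can reach state (P, S) from its initial state (∅, Q₀) by reading the length-i prefix of an infinite word w, then there is a node u on level i of the reduced split tree T_rs(A, w) whose label is S, and P equals the union of the labels of all nodes strictly to the left of u on level i. -/

import Mathlib

structure NAuto (Q A : Type) where
  Δ : Q → A → Q → Prop
  Q0 : Set Q
  F : Set Q

def IsPath {Q A : Type} (δ : Q → A → Q → Prop) (π : List Q) (v : List A) (p q : Q) : Prop :=
  π.length = v.length + 1 ∧ π.head? = some p ∧ π.getLast? = some q ∧
  ∀ (i : ℕ) a s t, v[i]? = some a → π[i]? = some s → π[i+1]? = some t → δ s a t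

def EDAat {Q A : Type} (M : NAuto Q A) (p : Q) : Prop :=
  ∃ (v : List A) (π₁ π₂ : List Q), π₁ ≠ π₂ ∧ IsPath M.Δ π₁ v p p ∧ IsPath M.Δ π₂ v p p

def EDA {Q A : Type} (M : NAuto Q A) : Prop := ∃ p, EDAat M p

def EDAF {Q A : Type} (M : NAuto Q A) : Prop := ∃ p ∈ M.F, EDAat M p

def IDAat {Q A : Type} (M : NAuto Q A) (p q : Q) : Prop :=
  p ≠ q ∧ ∃ (v : List A) (π₁ π₂ π₃ : List Q),
    IsPath M.Δ π₁ v p p ∧ IsPath M.Δ π₂ v p q ∧ IsPath M.Δ π₃ v q q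

def IDA {Q A : Type} (M : NAuto Q A) : Prop := ∃ p q, IDAat M p q

def IDAF {Q A : Type} (M : NAuto Q A) : Prop := ∃ p q, q ∈ M.F ∧ IDAat M p q

def BuchiRuns {Q A : Type} (M : NAuto Q A) (w : ℕ → A) : Set (ℕ → Q) :=
  {ρ | ρ 0 ∈ M.Q0 ∧ (∀ i, M.Δ (ρ i) (w i) (ρ (i+1))) ∧ ∀ n, ∃ m ≥ n, ρ m ∈ M.F}

def uvWord {A : Type} [Inhabited A] (u v : List A) : ℕ → A :=
  fun i => if i < u.length then u.getD i default else v.getD ((i - u.length) % v.length) default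

def stepSet {Q A : Type} (M : NAuto Q A) (P : Set Q) (a : A) : Set Q :=
  {q | ∃ p ∈ P, M.Δ p a q}

def splitLabelFrom {Q A : Type} (M : NAuto Q A) (w : ℕ → A) : Set Q → ℕ → List Bool → Set Q
  | P, _, [] => P
  | P, i, d :: u =>
      splitLabelFrom M w
        (if d then stepSet M P (w i) \ M.F else stepSet M P (w i) ∩ M.F) (i+1) u

def splitLabel {Q A : Type} (M : NAuto Q A) (w : ℕ → A) (u : List Bool) : Set Q :=
  splitLabelFrom M w M.Q0 0 u

def LeftOf (u v : List Bool) : Prop :=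
  u.length = v.length ∧ ∃ i, i < u.length ∧ u.take i = v.take i ∧
    u[i]? = some false ∧ v[i]? = some true

def rLabel {Q A : Type} (M : NAuto Q A) (w : ℕ → A) (u : List Bool) : Set Q :=
  splitLabel M w u \ ⋃ (v : List Bool) (_ : LeftOf v u), splitLabel M w v

def prefixNode (π : ℕ → Bool) (n : ℕ) : List Bool := List.ofFn (fun i : Fin n => π i)

def IsRSTPath {Q A : Type} (M : NAuto Q A) (w : ℕ → A) (π : ℕ → Bool) : Prop :=
  ∀ n, (rLabel M w (prefixNode π n)).Nonempty

def primeStep {Q A : Type} (M : NAuto Q A) (a : A) :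
    Set Q × Set Q → Set Q × Set Q → Prop := fun PS PS' =>
  PS'.2.Nonempty ∧
  ((PS'.1 = stepSet M PS.1 a ∧ PS'.2 = (stepSet M PS.2 a ∩ M.F) \ PS'.1) ∨
   (PS'.1 = stepSet M PS.1 a ∪ (stepSet M PS.2 a ∩ M.F) ∧
    PS'.2 = (stepSet M PS.2 a \ M.F) \ PS'.1))

def PrimeBuchiRuns {Q A : Type} (M : NAuto Q A) (w : ℕ → A) :
    Set (ℕ → Set Q × Set Q) :=
  {ρ | ρ 0 = (∅, M.Q0) ∧ (∀ i, primeStep M (w i) (ρ i) (ρ (i+1))) ∧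
       ∀ n, ∃ m ≥ n, (ρ m).2 ⊆ M.F}

def ReachPrime {Q A : Type} (M : NAuto Q A) (w : ℕ → A) : ℕ → Set Q × Set Q → Prop
  | 0, PS => PS = (∅, M.Q0)
  | i+1, PS => ∃ PS', ReachPrime M w i PS' ∧ primeStep M (w i) PS' PS

/-!
Induction on `i`, tracking the node `u` of the split tree that A' is at: `S` is the reduced label
of `u` and `P` the union of the full labels of the nodes left of `u`. The latter is also the union
of their reduced labels, because the leftmost occurrence of a state lies left of every other one.
A left or right move of A' then computes exactly these two sets for the child `u ++ [false]` or
`u ++ [true]`. A' only steps from the reduced label `S` rather than from the full label of `u`,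
but the successors this misses are successors of states in `P`, so they lie left of the child.
-/

lemma LeftOf.length_eq {v u : List Bool} (h : LeftOf v u) : v.length = u.length := h.1

lemma LeftOf.irrefl (u : List Bool) : ¬ LeftOf u u := by
  rintro ⟨-, i, -, -, hf, ht⟩
  simp [hf] at ht

lemma List.getElem?_eq_of_take_eq {α : Type*} {v u : List α} {j k : ℕ}
    (h : v.take j = u.take j) (hk : k < j) : v[k]? = u[k]? := by
  rw [← List.getElem?_take_of_lt hk, h, List.getElem?_take_of_lt hk]

lemma LeftOf.trans {v₁ v₂ v₃ : List Bool} (h₁₂ : LeftOf v₁ v₂) (h₂₃ : LeftOf v₂ v₃) :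
    LeftOf v₁ v₃ := by
  obtain ⟨hl₁₂, i, hi, ht₁₂, h₁i, h₂i⟩ := h₁₂
  obtain ⟨hl₂₃, j, hj, ht₂₃, h₂j, h₃j⟩ := h₂₃
  refine ⟨hl₁₂.trans hl₂₃, ?_⟩
  rcases lt_trichotomy i j with hij | rfl | hij
  · refine ⟨i, hi, ?_, h₁i, ?_⟩
    · rw [ht₁₂, ← min_eq_left hij.le, ← List.take_take, ht₂₃, List.take_take]
    · rw [← List.getElem?_eq_of_take_eq ht₂₃ hij, h₂i]
  · exact ⟨i, hi, ht₁₂.trans ht₂₃, h₁i, h₃j⟩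
  · refine ⟨j, by omega, ?_, ?_, h₃j⟩
    · rw [← min_eq_left hij.le, ← List.take_take, ht₁₂, List.take_take, min_eq_left hij.le, ht₂₃]
    · rw [List.getElem?_eq_of_take_eq ht₁₂ hij, h₂j]

instance : IsStrictOrder (List Bool) LeftOf where
  irrefl := LeftOf.irrefl
  trans _ _ _ := LeftOf.trans

lemma not_leftOf_nil (v : List Bool) : ¬ LeftOf v [] := by
  rintro ⟨hlen, i, hi, -⟩
  simp_all

lemma leftOf_concat_iff {v u : List Bool} {d : Bool} :
    LeftOf v (u ++ [d]) ↔
      ∃ v₀ e, v = v₀ ++ [e] ∧ (LeftOf v₀ u ∨ (v₀ = u ∧ e = false ∧ d = true)) := by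
  constructor
  · rintro ⟨hlen, j, hj, htake, hvj, huj⟩
    obtain ⟨v₀, e, rfl⟩ : ∃ v₀ e, v = v₀ ++ [e] := by
      rcases v.eq_nil_or_concat with rfl | ⟨v₀, e, rfl⟩
      · simp at hlen
      · exact ⟨v₀, e, List.concat_eq_append ..⟩
    simp only [List.length_append, List.length_singleton, add_left_inj] at hlen hj
    refine ⟨v₀, e, rfl, ?_⟩
    rcases (Nat.lt_succ_iff.mp hj).lt_or_eq with hju | rfl
    · left
      rw [List.take_append_of_le_length hju.le, List.take_append_of_le_length (hlen ▸ hju.le)]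
        at htake
      rw [List.getElem?_append_left hju] at hvj
      rw [List.getElem?_append_left (hlen ▸ hju)] at huj
      exact ⟨hlen, j, hju, htake, hvj, huj⟩
    · rw [List.take_left' rfl, List.take_left' hlen.symm] at htake
      subst htake
      rw [List.getElem?_concat_length] at hvj huj
      exact Or.inr ⟨rfl, by simpa using hvj, by simpa using huj⟩
  · rintro ⟨v₀, e, rfl, ⟨hlen, j, hj, htake, hvj, huj⟩ | ⟨rfl, rfl, rfl⟩⟩
    · refine ⟨by simp [hlen], j, by simp; omega, ?_, ?_, ?_⟩
      · rw [List.take_append_of_le_length hj.le,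
          List.take_append_of_le_length (hlen ▸ hj.le), htake]
      · rwa [List.getElem?_append_left hj]
      · rwa [List.getElem?_append_left (hlen ▸ hj)]
    · exact ⟨by simp, v₀.length, by simp, by rw [List.take_left' rfl, List.take_left' rfl],
        List.getElem?_concat_length, List.getElem?_concat_length⟩

section

variable {Q A : Type} (M : NAuto Q A) (w : ℕ → A)

lemma splitLabelFrom_concat (d : Bool) (u : List Bool) (P : Set Q) (i : ℕ) :
    splitLabelFrom M w P i (u ++ [d]) =
      if d then stepSet M (splitLabelFrom M w P i u) (w (i + u.length)) \ M.F
      else stepSet M (splitLabelFrom M w P i u) (w (i + u.length)) ∩ M.F := by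
  induction u generalizing P i with
  | nil => rfl
  | cons b u ih =>
    rw [List.cons_append, splitLabelFrom, splitLabelFrom, ih, List.length_cons,
      Nat.add_right_comm, Nat.add_assoc]

lemma splitLabel_concat (u : List Bool) (d : Bool) :
    splitLabel M w (u ++ [d]) =
      if d then stepSet M (splitLabel M w u) (w u.length) \ M.F
      else stepSet M (splitLabel M w u) (w u.length) ∩ M.F := by
  rw [splitLabel, splitLabelFrom_concat, Nat.zero_add]
  rfl

lemma stepSet_mono {X Y : Set Q} (h : X ⊆ Y) (a : A) : stepSet M X a ⊆ stepSet M Y a :=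
  fun _ ⟨p, hp, hpq⟩ => ⟨p, h hp, hpq⟩

def splitLabelLeftOf (u : List Bool) : Set Q :=
  ⋃ (v : List Bool) (_ : LeftOf v u), splitLabel M w v

lemma rLabel_eq_sdiff (u : List Bool) :
    rLabel M w u = splitLabel M w u \ splitLabelLeftOf M w u := rfl

lemma splitLabelLeftOf_nil : splitLabelLeftOf M w [] = ∅ := by
  simp [splitLabelLeftOf, not_leftOf_nil]

lemma rLabel_nil : rLabel M w [] = M.Q0 := by
  rw [rLabel_eq_sdiff, splitLabelLeftOf_nil, Set.sdiff_empty]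
  rfl

/-- Leftmost occurrences exist because each level of the split tree is finite. -/
lemma iUnion_rLabel_leftOf (u : List Bool) :
    ⋃ (v : List Bool) (_ : LeftOf v u), rLabel M w v = splitLabelLeftOf M w u := by
  refine (Set.iUnion₂_mono fun v _ => Set.sdiff_subset).antisymm ?_
  refine Set.iUnion₂_subset fun v hvu q hq => ?_
  have hwf := (List.finite_length_eq Bool v.length).wellFoundedOn (r := LeftOf)
  refine hwf.induction (P := fun v => ∀ u, LeftOf v u → q ∈ splitLabel M w v →
    q ∈ ⋃ (v : List Bool) (_ : LeftOf v u), rLabel M w v) rfl ?_ u hvu hq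
  intro x hx ih u hxu hq
  by_cases hqx : q ∈ splitLabelLeftOf M w x
  · simp only [splitLabelLeftOf, Set.mem_iUnion] at hqx
    obtain ⟨z, hzx, hqz⟩ := hqx
    exact ih z (hzx.length_eq.trans hx) hzx u (hzx.trans hxu) hqz
  · exact Set.mem_biUnion hxu ⟨hq, hqx⟩

lemma splitLabel_concat_subset (v : List Bool) (e : Bool) :
    splitLabel M w (v ++ [e]) ⊆ stepSet M (splitLabel M w v) (w v.length) := by
  rw [splitLabel_concat]
  cases e
  · exact Set.inter_subset_left
  · exact Set.sdiff_subset

lemma exists_mem_splitLabel_concat {v : List Bool} {q : Q}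
    (hq : q ∈ stepSet M (splitLabel M w v) (w v.length)) :
    ∃ e, q ∈ splitLabel M w (v ++ [e]) := by
  by_cases hqF : q ∈ M.F
  · exact ⟨false, by rw [splitLabel_concat]; exact ⟨hq, hqF⟩⟩
  · exact ⟨true, by rw [splitLabel_concat]; exact ⟨hq, hqF⟩⟩

lemma splitLabelLeftOf_concat_eq (u : List Bool) (d : Bool) :
    splitLabelLeftOf M w (u ++ [d]) =
      stepSet M (splitLabelLeftOf M w u) (w u.length) ∪
        if d then stepSet M (splitLabel M w u) (w u.length) ∩ M.F else ∅ := by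
  ext q
  simp only [splitLabelLeftOf, Set.mem_iUnion, Set.mem_union, leftOf_concat_iff]
  constructor
  · rintro ⟨_, ⟨v, e, rfl, hvu | ⟨rfl, rfl, rfl⟩⟩, hq⟩
    · obtain ⟨p, hp, hpq⟩ := splitLabel_concat_subset M w v e hq
      exact Or.inl ⟨p, Set.mem_iUnion₂_of_mem hvu hp, hvu.length_eq ▸ hpq⟩
    · right
      rwa [splitLabel_concat] at hq
  · rintro (⟨p, hp, hpq⟩ | hq)
    · simp only [Set.mem_iUnion] at hp
      obtain ⟨v, hvu, hpv⟩ := hp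
      obtain ⟨e, hq⟩ := exists_mem_splitLabel_concat M w (q := q) (v := v)
        ⟨p, hpv, hvu.length_eq ▸ hpq⟩
      exact ⟨v ++ [e], ⟨v, e, rfl, Or.inl hvu⟩, hq⟩
    · cases d
      · simp at hq
      · refine ⟨u ++ [false], ⟨u, false, rfl, Or.inr ⟨rfl, rfl, rfl⟩⟩, ?_⟩
        rw [splitLabel_concat]
        exact hq

lemma stepSet_sdiff_of_subset {X L D : Set Q} {a : A} (h : stepSet M L a ⊆ D) :
    stepSet M (X \ L) a \ D = stepSet M X a \ D := by
  refine (Set.sdiff_subset_sdiff_left (stepSet_mono M Set.sdiff_subset a)).antisymm ?_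
  rintro q ⟨⟨p, hp, hpq⟩, hqD⟩
  exact ⟨⟨p, ⟨hp, fun hpL => hqD (h ⟨p, hpL, hpq⟩)⟩, hpq⟩, hqD⟩

lemma splitLabelLeftOf_concat (u : List Bool) (d : Bool) :
    splitLabelLeftOf M w (u ++ [d]) =
      stepSet M (splitLabelLeftOf M w u) (w u.length) ∪
        if d then stepSet M (rLabel M w u) (w u.length) ∩ M.F else ∅ := by
  rw [splitLabelLeftOf_concat_eq]
  cases d
  · rfl
  · simp only [if_true, rLabel_eq_sdiff]
    rw [← Set.union_sdiff_self, ← Set.union_sdiff_self (t := stepSet M (_ \ _) _ ∩ _),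
      Set.inter_sdiff_right_comm, Set.inter_sdiff_right_comm,
      stepSet_sdiff_of_subset M subset_rfl]

lemma rLabel_concat (u : List Bool) (d : Bool) :
    rLabel M w (u ++ [d]) =
      (if d then stepSet M (rLabel M w u) (w u.length) \ M.F
        else stepSet M (rLabel M w u) (w u.length) ∩ M.F) \ splitLabelLeftOf M w (u ++ [d]) := by
  have hD : stepSet M (splitLabelLeftOf M w u) (w u.length) ⊆ splitLabelLeftOf M w (u ++ [d]) :=
    splitLabelLeftOf_concat_eq M w u d ▸ Set.subset_union_left
  rw [rLabel_eq_sdiff, splitLabel_concat, rLabel_eq_sdiff]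
  cases d
  · simp only [Bool.false_eq_true, if_false]
    rw [Set.inter_sdiff_right_comm, Set.inter_sdiff_right_comm, stepSet_sdiff_of_subset M hD]
  · simp only [if_true]
    rw [Set.sdiff_sdiff_comm (s := stepSet M (splitLabel M w u) _),
      Set.sdiff_sdiff_comm (s := stepSet M (_ \ _) _), stepSet_sdiff_of_subset M hD]

lemma exists_child_of_primeStep {u : List Bool} {P S : Set Q}
    (h : primeStep M (w u.length) (splitLabelLeftOf M w u, rLabel M w u) (P, S)) :
    ∃ d, rLabel M w (u ++ [d]) = S ∧ P = splitLabelLeftOf M w (u ++ [d]) := by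
  rcases h with ⟨-, ⟨hP, hS⟩ | ⟨hP, hS⟩⟩ <;> dsimp only at hP hS
  · have hleft := splitLabelLeftOf_concat M w u false
    rw [if_neg Bool.false_ne_true, Set.union_empty] at hleft
    exact ⟨false, by rw [hS, hP, rLabel_concat, hleft]; rfl, by rw [hP, hleft]⟩
  · have hleft := splitLabelLeftOf_concat M w u true
    rw [if_pos rfl] at hleft
    exact ⟨true, by rw [hS, hP, rLabel_concat, hleft]; rfl, by rw [hP, hleft]⟩

end

theorem prime_reach_invariant {Q A : Type} (M : NAuto Q A) (w : ℕ → A) (i : ℕ)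
    (P S : Set Q) (h : ReachPrime M w i (P, S)) :
    ∃ u : List Bool, u.length = i ∧ rLabel M w u = S ∧
      P = ⋃ (v : List Bool) (_ : LeftOf v u), rLabel M w v := by
  simp only [iUnion_rLabel_leftOf]
  induction i generalizing P S with
  | zero =>
    obtain ⟨rfl, rfl⟩ := Prod.ext_iff.mp h
    exact ⟨[], rfl, rLabel_nil M w, (splitLabelLeftOf_nil M w).symm⟩
  | succ i ih =>
    obtain ⟨⟨P', S'⟩, hreach, hstep⟩ := h
    obtain ⟨u, rfl, rfl, rfl⟩ := ih P' S' hreach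
    obtain ⟨d, hS, hP⟩ := exists_child_of_primeStep M w hstep
    exact ⟨u ++ [d], by simp, hS, hP⟩
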